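/- Let λ > 0 and define P_{t,2}^λ(x,y) = (2λ(xy)^λ t/π) ∫_{π/2}^π (sin θ)^{2λ−1} / [(x−y)² + t² + 2xy(1−cos θ)]^{λ+1} dθ. Then there exists C > 0 such that |∂_t P_{t,2}^λ(x,y)| ≤ C x^λ / (x+y+t)^{λ+2} for all x, y, t ∈ (0,∞). -/

import Mathlib

open MeasureTheory Set Real

private lemma sinpow_integrable {p : ℝ} (hp : -1 < p) :
    IntegrableOn (fun θ => Real.sin θ ^ p) (Ioo (π/2) π) := by
  have hmeas : AEStronglyMeasurable (fun θ => Real.sin θ ^ p)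
      (volume.restrict (Ioo (π/2) π)) := (Real.measurable_sin.pow_const _).aestronglyMeasurable
  rcases le_or_gt 0 p with hp0 | hp0
  · refine Integrable.mono' (integrableOn_const (C := (1:ℝ)) measure_Ioo_lt_top.ne)
      hmeas ?_
    filter_upwards [ae_restrict_mem measurableSet_Ioo] with θ hθ
    have h0 : 0 ≤ Real.sin θ := Real.sin_nonneg_of_nonneg_of_le_pi
      (by nlinarith [pi_pos, hθ.1]) hθ.2.le
    rw [Real.norm_eq_abs, abs_of_nonneg (Real.rpow_nonneg h0 p)]
    exact Real.rpow_le_one h0 (Real.sin_le_one θ) hp0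
  · have key : IntervalIntegrable (fun θ => (π - θ) ^ p) volume (π/2) π := by
      have h0 : IntervalIntegrable (fun u : ℝ => u ^ p) volume 0 (π/2) :=
        intervalIntegral.intervalIntegrable_rpow' hp
      have h1 := (h0.comp_sub_left π).symm
      rwa [show π - π/2 = π/2 by ring, sub_zero] at h1
    have key2 : IntegrableOn (fun θ => (2/π)^p * (π - θ) ^ p) (Ioo (π/2) π) := by
      rw [intervalIntegrable_iff_integrableOn_Ioc_of_le (by linarith [pi_pos])] at key
      have key3 : IntegrableOn (fun θ => (2/π)^p * (π - θ) ^ p) (Ioc (π/2) π) :=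
        key.const_mul _
      exact key3.mono_set Ioo_subset_Ioc_self
    refine Integrable.mono' key2 hmeas ?_
    filter_upwards [ae_restrict_mem measurableSet_Ioo] with θ hθ
    have h0 : 0 < π - θ := by linarith [hθ.2]
    have h1 : 2/π * (π - θ) ≤ Real.sin θ := by
      have := Real.mul_le_sin (x := π - θ) h0.le (by linarith [hθ.1])
      rwa [Real.sin_pi_sub] at this
    have h2 : 0 < 2/π * (π - θ) := by
      have := pi_pos; positivity
    have h3 : 0 ≤ Real.sin θ := le_trans h2.le h1
    rw [Real.norm_eq_abs, abs_of_nonneg (Real.rpow_nonneg h3 p)]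
    calc Real.sin θ ^ p ≤ (2/π * (π - θ)) ^ p :=
          Real.rpow_le_rpow_of_nonpos h2 h1 hp0.le
      _ = (2/π)^p * (π - θ)^p := Real.mul_rpow (by have := pi_pos; positivity) h0.le

/-- The far part `P_{t,2}^λ(x,y)` of the Bessel Poisson kernel. -/
noncomputable def besselPoissonKernelFar (l t x y : ℝ) : ℝ :=
  (2 * l * (x * y) ^ l * t / Real.pi) *
    ∫ θ in Ioo (Real.pi / 2) Real.pi,
      Real.sin θ ^ (2 * l - 1) /
        ((x - y) ^ 2 + t ^ 2 + 2 * x * y * (1 - Real.cos θ)) ^ (l + 1)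

set_option maxHeartbeats 1000000 in
theorem bessel_poisson_far_derivative_bound (l : ℝ) (hl : 0 < l) :
    ∃ C : ℝ, 0 < C ∧ ∀ x y t : ℝ, 0 < x → 0 < y → 0 < t →
      |deriv (fun s => besselPoissonKernelFar l s x y) t|
        ≤ C * x ^ l / (x + y + t) ^ (l + 2) := by
  have hπ : 0 < π := pi_pos
  have hp : -1 < 2 * l - 1 := by linarith
  have hgint := sinpow_integrable hp
  set g : ℝ → ℝ := fun θ => Real.sin θ ^ (2 * l - 1) with hg_def
  set Cg : ℝ := ∫ θ in Ioo (π/2) π, g θ with hCg_def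
  have hgnn : ∀ θ ∈ Ioo (π/2) π, 0 ≤ g θ := by
    intro θ hθ
    exact Real.rpow_nonneg (Real.sin_nonneg_of_nonneg_of_le_pi (by nlinarith [hθ.1]) hθ.2.le) _
  have hCg0 : 0 ≤ Cg := setIntegral_nonneg measurableSet_Ioo hgnn
  refine ⟨(2*l/π) * (Cg + 1) * (4*(l+1)*(12:ℝ)^(l+2)), ?_, ?_⟩
  · apply mul_pos (mul_pos (by positivity) (by linarith)) (by positivity)
  intro x y t hx hy ht
  set S : ℝ := x + y + t with hS_def
  have hS : 0 < S := by positivity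
  set M : ℝ := S^2/12 with hM_def
  have hM : 0 < M := by positivity
  set D : ℝ → ℝ → ℝ := fun s θ => (x - y)^2 + s^2 + 2*x*y*(1 - Real.cos θ) with hD_def
  set F : ℝ → ℝ → ℝ := fun s θ => g θ / (D s θ)^(l+1) with hF_def
  set F' : ℝ → ℝ → ℝ := fun s θ => -(g θ * ((l+1) * (2*s)) / (D s θ)^(l+2)) with hF'_def
  -- lower bound for D on the ball
  have hball : ∀ s ∈ Metric.ball t (t/2), t/2 < s ∧ s < 3*t/2 := by
    intro s hs
    rw [Metric.mem_ball, Real.dist_eq, abs_sub_lt_iff] at hs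
    constructor <;> linarith [hs.1, hs.2]
  have htball : t ∈ Metric.ball t (t/2) := Metric.mem_ball_self (by positivity)
  have hDlb : ∀ θ ∈ Ioo (π/2) π, ∀ s ∈ Metric.ball t (t/2), M ≤ D s θ := by
    intro θ hθ s hs
    have hcos : Real.cos θ ≤ 0 :=
      Real.cos_nonpos_of_pi_div_two_le_of_le hθ.1.le (by linarith [hθ.2.le])
    have h2 : t/2 < s := (hball s hs).1
    have h3 : 2*x*y ≤ 2*x*y*(1 - Real.cos θ) := by
      nlinarith [mul_nonneg (mul_nonneg (mul_nonneg (by norm_num : (0:ℝ) ≤ 2) hx.le) hy.le)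
        (neg_nonneg.2 hcos)]
    simp only [hD_def, hM_def, hS_def]
    nlinarith [sq_nonneg (x - y), sq_nonneg (x - t), sq_nonneg (y - t), sq_nonneg x,
      sq_nonneg y, sq_nonneg (s - t/2), mul_pos ht (show (0:ℝ) < s - t/2 by linarith)]
  have hDpos : ∀ θ ∈ Ioo (π/2) π, ∀ s ∈ Metric.ball t (t/2), 0 < D s θ :=
    fun θ hθ s hs => lt_of_lt_of_le hM (hDlb θ hθ s hs)
  -- measurability
  have hgm : Measurable g := Real.measurable_sin.pow_const _
  have hDm : ∀ s : ℝ, Measurable (fun θ => D s θ) := by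
    intro s
    simp only [hD_def]
    exact measurable_const.add ((measurable_const.sub Real.measurable_cos).const_mul (2*x*y))
  have hFmeas : ∀ s : ℝ, AEStronglyMeasurable (F s) (volume.restrict (Ioo (π/2) π)) := by
    intro s
    exact (hgm.div (((hDm s)).pow_const _)).aestronglyMeasurable
  have hF'meas : AEStronglyMeasurable (F' t) (volume.restrict (Ioo (π/2) π)) :=
    (((hgm.mul_const _).div (((hDm t)).pow_const _)).neg).aestronglyMeasurable
  -- integrability of F t
  have hFabs : ∀ θ ∈ Ioo (π/2) π, F t θ ≤ g θ * (M^(l+1))⁻¹ := by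
    intro θ hθ
    have h1 : M ≤ D t θ := hDlb θ hθ t htball
    have h4 : M^(l+1) ≤ (D t θ)^(l+1) := Real.rpow_le_rpow hM.le h1 (by linarith)
    have h5 : ((D t θ)^(l+1))⁻¹ ≤ (M^(l+1))⁻¹ :=
      inv_anti₀ (Real.rpow_pos_of_pos hM _) h4
    simp only [hF_def, div_eq_mul_inv]
    exact mul_le_mul_of_nonneg_left h5 (hgnn θ hθ)
  have hFnn : ∀ θ ∈ Ioo (π/2) π, 0 ≤ F t θ := by
    intro θ hθ
    exact div_nonneg (hgnn θ hθ) (Real.rpow_pos_of_pos (hDpos θ hθ t htball) _).le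
  have hFt_int : Integrable (F t) (volume.restrict (Ioo (π/2) π)) := by
    refine Integrable.mono' (hgint.mul_const ((M^(l+1))⁻¹)) (hFmeas t) ?_
    filter_upwards [ae_restrict_mem measurableSet_Ioo] with θ hθ
    rw [Real.norm_eq_abs, abs_of_nonneg (hFnn θ hθ)]
    exact hFabs θ hθ
  -- the bound for F'
  have hF'bound : ∀ θ ∈ Ioo (π/2) π, ∀ s ∈ Metric.ball t (t/2),
      ‖F' s θ‖ ≤ g θ * ((l+1) * (3*t) * ((M^(l+2))⁻¹)) := by
    intro θ hθ s hs
    have hDp : 0 < D s θ := hDpos θ hθ s hs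
    have hgθ := hgnn θ hθ
    have hs1 : 0 < s := lt_trans (by positivity) (hball s hs).1
    have hs2 : 2*s ≤ 3*t := by linarith [(hball s hs).2]
    have hDr : 0 < (D s θ)^(l+2) := Real.rpow_pos_of_pos hDp _
    have hMr : 0 < M^(l+2) := Real.rpow_pos_of_pos hM _
    have h4 : M^(l+2) ≤ (D s θ)^(l+2) := Real.rpow_le_rpow hM.le (hDlb θ hθ s hs) (by linarith)
    have h5 : ((D s θ)^(l+2))⁻¹ ≤ (M^(l+2))⁻¹ := inv_anti₀ hMr h4
    have hnn : 0 ≤ g θ * ((l+1) * (2*s)) / (D s θ)^(l+2) :=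
      div_nonneg (mul_nonneg hgθ (mul_nonneg (by linarith) (by linarith))) hDr.le
    simp only [hF'_def]
    rw [norm_neg, Real.norm_eq_abs, abs_of_nonneg hnn, div_eq_mul_inv]
    calc g θ * ((l+1) * (2*s)) * ((D s θ)^(l+2))⁻¹
        ≤ g θ * ((l+1) * (3*t)) * (M^(l+2))⁻¹ := by
          apply mul_le_mul _ h5 (by positivity) (by positivity)
          exact mul_le_mul_of_nonneg_left
            (mul_le_mul_of_nonneg_left hs2 (by linarith)) hgθ
      _ = g θ * ((l+1) * (3*t) * ((M^(l+2))⁻¹)) := by ring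
  have hbnd_int : Integrable (fun θ => g θ * ((l+1) * (3*t) * ((M^(l+2))⁻¹)))
      (volume.restrict (Ioo (π/2) π)) := hgint.mul_const _
  -- differentiability
  have hdiff : ∀ θ ∈ Ioo (π/2) π, ∀ s ∈ Metric.ball t (t/2),
      HasDerivAt (fun u => F u θ) (F' s θ) s := by
    intro θ hθ s hs
    have hDp : 0 < D s θ := hDpos θ hθ s hs
    have hds : HasDerivAt (fun u => D u θ) (2*s) s := by
      have h1 : HasDerivAt (fun u : ℝ => u^2) (2*s) s := by
        simpa using hasDerivAt_pow 2 s
      simpa [hD_def] using (h1.const_add ((x-y)^2)).add_const (2*x*y*(1-Real.cos θ))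
    have hpow : HasDerivAt (fun u => (D u θ)^(l+1)) ((2*s)*(l+1)*(D s θ)^(l+1-1)) s :=
      hds.rpow_const (Or.inl hDp.ne')
    have hppos : 0 < (D s θ)^(l+1) := Real.rpow_pos_of_pos hDp _
    have hmul : HasDerivAt (fun u => g θ * ((D u θ)^(l+1))⁻¹)
        (g θ * (-((2*s)*(l+1)*(D s θ)^(l+1-1)) / ((D s θ)^(l+1))^2)) s :=
      (hpow.inv hppos.ne').const_mul (g θ)
    have hfun : (fun u => F u θ) = fun u => g θ * (((D u θ)^(l+1))⁻¹) := by
      funext u; simp [hF_def, div_eq_mul_inv]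
    rw [hfun]
    convert hmul using 1
    have hsq : ((D s θ)^(l+1))^2 = (D s θ)^(l+2) * (D s θ)^l := by
      rw [sq, ← Real.rpow_add hDp, ← Real.rpow_add hDp]
      congr 1; ring
    have hl1 : (D s θ)^(l+1-1) = (D s θ)^l := by norm_num
    have hne1 : (D s θ)^(l+2) ≠ 0 := (Real.rpow_pos_of_pos hDp _).ne'
    have hne2 : (D s θ)^l ≠ 0 := (Real.rpow_pos_of_pos hDp _).ne'
    simp only [hF'_def]
    rw [hl1, hsq]
    field_simp
  -- apply the dominated derivative theorem
  obtain ⟨hF'int, hderiv⟩ :=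
    hasDerivAt_integral_of_dominated_loc_of_deriv_le (μ := volume.restrict (Ioo (π/2) π))
      (F := F) (F' := F') (x₀ := t)
      (bound := fun θ => g θ * ((l+1) * (3*t) * ((M^(l+2))⁻¹)))
      (Metric.ball_mem_nhds t (half_pos ht)) (Filter.Eventually.of_forall hFmeas) hFt_int hF'meas
      (by filter_upwards [ae_restrict_mem measurableSet_Ioo] with θ hθ
          exact fun s hs => hF'bound θ hθ s hs)
      hbnd_int
      (by filter_upwards [ae_restrict_mem measurableSet_Ioo] with θ hθ
          exact fun s hs => hdiff θ hθ s hs)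
  -- product rule
  have hlin : HasDerivAt (fun s : ℝ => 2*l*(x*y)^l*s/π) (2*l*(x*y)^l/π) t := by
    simpa using ((hasDerivAt_id t).const_mul (2*l*(x*y)^l)).div_const π
  have hmain : HasDerivAt (fun s => besselPoissonKernelFar l s x y)
      ((2*l*(x*y)^l/π) * (∫ θ in Ioo (π/2) π, F t θ)
        + (2*l*(x*y)^l*t/π) * (∫ θ in Ioo (π/2) π, F' t θ)) t := by
    have := hlin.mul hderiv
    have hfun : (fun s => besselPoissonKernelFar l s x y)
        = fun s => (2*l*(x*y)^l*s/π) * ∫ θ in Ioo (π/2) π, F s θ := by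
      funext s
      simp only [besselPoissonKernelFar, hF_def, hg_def, hD_def]
    rw [hfun]
    exact this
  rw [hmain.deriv]
  -- estimates
  set I1 : ℝ := ∫ θ in Ioo (π/2) π, F t θ with hI1_def
  set I2 : ℝ := ∫ θ in Ioo (π/2) π, F' t θ with hI2_def
  have hI1nn : 0 ≤ I1 := setIntegral_nonneg measurableSet_Ioo hFnn
  have hI1le : I1 ≤ Cg * (M^(l+1))⁻¹ := by
    have h1 : I1 ≤ ∫ θ in Ioo (π/2) π, g θ * (M^(l+1))⁻¹ :=
      setIntegral_mono_on hFt_int (hgint.mul_const _) measurableSet_Ioo hFabs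
    rwa [integral_mul_const] at h1
  have hI2le : |I2| ≤ Cg * ((l+1) * (3*t) * ((M^(l+2))⁻¹)) := by
    have h1 : |I2| ≤ ∫ θ in Ioo (π/2) π, ‖F' t θ‖ := by
      rw [← Real.norm_eq_abs]
      exact norm_integral_le_integral_norm _
    have h2 : (∫ θ in Ioo (π/2) π, ‖F' t θ‖)
        ≤ ∫ θ in Ioo (π/2) π, g θ * ((l+1) * (3*t) * ((M^(l+2))⁻¹)) :=
      setIntegral_mono_on hF'int.norm hbnd_int measurableSet_Ioo
        (fun θ hθ => hF'bound θ hθ t htball)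
    rw [integral_mul_const] at h2
    exact h1.trans h2
  have hA1 : 0 ≤ 2*l*(x*y)^l/π := by positivity
  have hA2 : 0 ≤ 2*l*(x*y)^l*t/π := by positivity
  -- rpow algebra
  have hxyl : (x*y)^l = x^l * y^l := Real.mul_rpow hx.le hy.le
  have hMinv1 : (M^(l+1))⁻¹ = M * (M^(l+2))⁻¹ := by
    have h12 : M^(l+2) = M^(l+1) * M := by
      rw [show l+2 = (l+1)+1 by ring, Real.rpow_add hM, Real.rpow_one]
    rw [h12, mul_inv, ← mul_assoc, mul_comm M, mul_assoc, mul_inv_cancel₀ hM.ne', mul_one]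
  have hMpow2 : (M^(l+2))⁻¹ = 12^(l+2) * (S^(2*(l+2)))⁻¹ := by
    have h1 : M ^ (l+2) = S^(2*(l+2)) / 12^(l+2) := by
      rw [hM_def, Real.div_rpow (sq_nonneg S) (by norm_num : (0:ℝ) ≤ 12)]
      congr 1
      rw [← Real.rpow_two, ← Real.rpow_mul hS.le]
    rw [h1, inv_div, div_eq_mul_inv]
  have hMle : M ≤ S^2 := by
    rw [hM_def]; nlinarith [sq_nonneg S]
  have ht2 : t^2 ≤ S^2 := by nlinarith
  have hyl : y^l ≤ S^l := Real.rpow_le_rpow hy.le (by simp only [hS_def]; linarith) hl.le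
  have hSkey : S^l * ((S^(2*(l+2)))⁻¹ * S^2) = (S^(l+2))⁻¹ := by
    rw [← Real.rpow_two, ← Real.rpow_neg hS.le, ← Real.rpow_add hS, ← Real.rpow_add hS,
      ← Real.rpow_neg hS.le]
    congr 1; ring
  have hkey : y^l * ((S^(2*(l+2)))⁻¹ * S^2) ≤ (S^(l+2))⁻¹ := by
    rw [← hSkey]
    exact mul_le_mul_of_nonneg_right hyl (by positivity)
  -- final calc
  calc |2*l*(x*y)^l/π * I1 + 2*l*(x*y)^l*t/π * I2|
      ≤ 2*l*(x*y)^l/π * I1 + 2*l*(x*y)^l*t/π * |I2| := by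
        have h := abs_add_le (2*l*(x*y)^l/π * I1) (2*l*(x*y)^l*t/π * I2)
        rwa [abs_mul, abs_mul, abs_of_nonneg hA1, abs_of_nonneg hA2,
          abs_of_nonneg hI1nn] at h
    _ ≤ 2*l*(x*y)^l/π * (Cg * (M^(l+1))⁻¹)
        + 2*l*(x*y)^l*t/π * (Cg * ((l+1) * (3*t) * ((M^(l+2))⁻¹))) := by
        gcongr
    _ = (2*l/π) * (x^l*y^l) * ((M^(l+2))⁻¹) * (Cg*M + 3*(l+1)*t^2*Cg) := by
        rw [hxyl, hMinv1]; ring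
    _ ≤ (2*l/π) * (x^l*y^l) * ((M^(l+2))⁻¹) * ((Cg+1)*(4*(l+1))*S^2) := by
        have hMinv : 0 ≤ (M^(l+2))⁻¹ := by positivity
        have hfac : 0 ≤ (2*l/π) * (x^l*y^l) * ((M^(l+2))⁻¹) := by positivity
        apply mul_le_mul_of_nonneg_left _ hfac
        nlinarith [mul_le_mul_of_nonneg_left hMle hCg0,
          mul_le_mul_of_nonneg_left ht2 (mul_nonneg (by linarith : (0:ℝ) ≤ 3*(l+1)) hCg0),
          sq_nonneg S, mul_nonneg hl.le (sq_nonneg S)]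
    _ = ((2*l/π) * (Cg+1) * (4*(l+1)*(12:ℝ)^(l+2)) * x^l)
          * (y^l * ((S^(2*(l+2)))⁻¹ * S^2)) := by
        rw [hMpow2]; ring
    _ ≤ ((2*l/π) * (Cg+1) * (4*(l+1)*(12:ℝ)^(l+2)) * x^l) * (S^(l+2))⁻¹ := by
        apply mul_le_mul_of_nonneg_left hkey
        have h1 : (0:ℝ) ≤ Cg + 1 := by linarith
        positivity
    _ = (2*l/π) * (Cg + 1) * (4*(l+1)*(12:ℝ)^(l+2)) * x^l / S^(l+2) := by
        rw [div_eq_mul_inv (2*l/π * (Cg + 1) * (4*(l+1)*(12:ℝ)^(l+2)) * x^l)]
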